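/- arXiv:math/0702153 — 4 statements merged into one kernel-verified Lean document; each statement's English description precedes it below -/
import Mathlib

section
/- Let T > 0, let u : ℝ^N × (0,T) → ℝ be continuous, let (εₖ) be a sequence of positive numbers tending to 0, and let uₖ : ℝ^N × (0,T) → ℝ be continuous functions converging locally uniformly to u. For each k let χₖ : ℝ^N × (0,T) → [0,1] be measurable and satisfy χₖ(x,t) = 1 whenever uₖ(x,t) ≥ 0 and χₖ(x,t) = 0 whenever uₖ(x,t) ≤ −εₖ. Assume χₖ converges weakly-* to a measurable function χ : ℝ^N × (0,T) → [0,1], in the sense that ∫₀^T ∫_{ℝ^N} φ χₖ dx dt → ∫₀^T ∫_{ℝ^N} φ χ dx dt for every integrable φ : ℝ^N × (0,T) → ℝ. Then 𝟙_{{u(·,t) > 0}}(x) ≤ χ(x,t) ≤ 𝟙_{{u(·,t) ≥ 0}}(x) for almost every (x,t) ∈ ℝ^N × (0,T). -/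
open MeasureTheory Set Filter Topology

/-! On the open set `{u > 0}` the continuity of `u` and the pointwise convergence `uₖ → u` give
`uₖ ≥ 0`, hence `χₖ = 1`, for all large `k`; on `{u < 0}` they give `uₖ ≤ -εₖ`, hence `χₖ = 0`.
Testing the weak-* convergence against indicators of finite-measure sets and using dominated
convergence for the bounded `χₖ`, the weak-* limit `χ` coincides a.e. with these pointwise limits,
so `χ = 1` a.e. on `{u > 0}` and `χ = 0` a.e. on `{u < 0}`; since `0 ≤ χ ≤ 1`, this is the claim. -/

def TendstoWeakStar {α : Type*} [MeasurableSpace α] (μ : Measure α) (F : ℕ → α → ℝ)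
    (f : α → ℝ) : Prop :=
  ∀ φ : α → ℝ, Integrable φ μ →
    Tendsto (fun k => ∫ x, φ x * F k x ∂μ) atTop (𝓝 (∫ x, φ x * f x ∂μ))

section WeakStarLimit

variable {α : Type*} [MeasurableSpace α] {μ : Measure α} {F : ℕ → α → ℝ} {f g : α → ℝ} {C : ℝ}

theorem TendstoWeakStar.restrict (hFf : TendstoWeakStar μ F f) {s : Set α}
    (hs : MeasurableSet s) : TendstoWeakStar (μ.restrict s) F f := by
  intro φ hφ
  simpa only [← indicator_mul_left, integral_indicator hs] using
    hFf (s.indicator φ) ((integrable_indicator_iff hs).2 hφ)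

theorem tendsto_integral_mul_of_tendsto_ae {φ : α → ℝ} (hφ : Integrable φ μ)
    (hF : ∀ k, AEStronglyMeasurable (F k) μ) (hFC : ∀ k, ∀ᵐ x ∂μ, ‖F k x‖ ≤ C)
    (hFg : ∀ᵐ x ∂μ, Tendsto (fun k => F k x) atTop (𝓝 (g x))) :
    Tendsto (fun k => ∫ x, φ x * F k x ∂μ) atTop (𝓝 (∫ x, φ x * g x ∂μ)) := by
  refine tendsto_integral_of_dominated_convergence (fun x => ‖φ x‖ * C)
    (fun k => hφ.aestronglyMeasurable.mul (hF k)) (hφ.norm.mul_const C) (fun k => ?_) ?_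
  · filter_upwards [hFC k] with x hx
    rw [norm_mul]
    exact mul_le_mul_of_nonneg_left hx (norm_nonneg _)
  · filter_upwards [hFg] with x hx using hx.const_mul (φ x)

theorem ae_eq_of_forall_integral_mul_eq [SigmaFinite μ]
    (hf : ∀ s, MeasurableSet s → μ s < ⊤ → IntegrableOn f s μ)
    (hg : ∀ s, MeasurableSet s → μ s < ⊤ → IntegrableOn g s μ)
    (hfg : ∀ φ, Integrable φ μ → ∫ x, φ x * f x ∂μ = ∫ x, φ x * g x ∂μ) : f =ᵐ[μ] g := by
  refine ae_eq_of_forall_setIntegral_eq_of_sigmaFinite hf hg fun s hs hμs => ?_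
  simpa only [← indicator_mul_left, Pi.one_apply, one_mul, integral_indicator hs] using
    hfg (s.indicator 1) ((integrable_indicator_iff hs).2 (integrableOn_const hμs.ne))

theorem TendstoWeakStar.ae_eq_of_tendsto_ae [SigmaFinite μ] (hFf : TendstoWeakStar μ F f)
    (hF : ∀ k, AEStronglyMeasurable (F k) μ) (hFC : ∀ k, ∀ᵐ x ∂μ, ‖F k x‖ ≤ C)
    (hf : AEStronglyMeasurable f μ) (hfC : ∀ᵐ x ∂μ, ‖f x‖ ≤ C)
    (hFg : ∀ᵐ x ∂μ, Tendsto (fun k => F k x) atTop (𝓝 (g x))) : f =ᵐ[μ] g := by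
  have hg : AEStronglyMeasurable g μ := aestronglyMeasurable_of_tendsto_ae atTop hF hFg
  have hgC : ∀ᵐ x ∂μ, ‖g x‖ ≤ C := by
    filter_upwards [ae_all_iff.2 hFC, hFg] with x hxC hx
    exact le_of_tendsto' hx.norm hxC
  refine ae_eq_of_forall_integral_mul_eq
    (fun s _ hμs => .of_bound hμs hf.restrict C (ae_restrict_of_ae hfC))
    (fun s _ hμs => .of_bound hμs hg.restrict C (ae_restrict_of_ae hgC))
    fun φ hφ => tendsto_nhds_unique (hFf φ hφ) (tendsto_integral_mul_of_tendsto_ae hφ hF hFC hFg)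

theorem TendstoWeakStar.ae_eq_on_of_tendsto [SigmaFinite μ] (hFf : TendstoWeakStar μ F f)
    (hF : ∀ k, AEStronglyMeasurable (F k) μ) (hFC : ∀ k, ∀ᵐ x ∂μ, ‖F k x‖ ≤ C)
    (hf : AEStronglyMeasurable f μ) (hfC : ∀ᵐ x ∂μ, ‖f x‖ ≤ C) {s : Set α}
    (hs : MeasurableSet s) (hFg : ∀ x ∈ s, Tendsto (fun k => F k x) atTop (𝓝 (g x))) :
    ∀ᵐ x ∂μ, x ∈ s → f x = g x :=
  (ae_restrict_iff' hs).1 <| (hFf.restrict hs).ae_eq_of_tendsto_ae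
    (fun k => (hF k).restrict) (fun k => ae_restrict_of_ae (hFC k)) hf.restrict
    (ae_restrict_of_ae hfC) ((ae_restrict_iff' hs).2 (.of_forall hFg))

end WeakStarLimit

theorem tendsto_one_of_tendsto_pos {a c : ℕ → ℝ} {a₀ : ℝ} (ha : Tendsto a atTop (𝓝 a₀))
    (ha₀ : 0 < a₀) (hc : ∀ k, 0 ≤ a k → c k = 1) : Tendsto c atTop (𝓝 1) :=
  tendsto_const_nhds.congr' <|
    (ha.eventually (eventually_gt_nhds ha₀)).mono fun k hk => (hc k hk.le).symm

theorem tendsto_zero_of_tendsto_neg {a c ε : ℕ → ℝ} {a₀ : ℝ} (ha : Tendsto a atTop (𝓝 a₀))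
    (hε : Tendsto ε atTop (𝓝 0)) (ha₀ : a₀ < 0) (hc : ∀ k, a k ≤ -ε k → c k = 0) :
    Tendsto c atTop (𝓝 0) := by
  refine tendsto_const_nhds.congr' ?_
  filter_upwards [ha.eventually (eventually_lt_nhds (show a₀ < a₀ / 2 by linarith)),
    hε.eventually (eventually_lt_nhds (show 0 < -a₀ / 2 by linarith))] with k hak hεk
  exact (hc k (by linarith)).symm

theorem indicator_pos_le_and_le_indicator_nonneg {X : Type*} {u : X → ℝ} {p : X} {c : ℝ}
    (hc : 0 ≤ c ∧ c ≤ 1) (hpos : 0 < u p → c = 1) (hneg : u p < 0 → c = 0) :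
    {q | 0 < u q}.indicator (fun _ => (1 : ℝ)) p ≤ c ∧
      c ≤ {q | 0 ≤ u q}.indicator (fun _ => (1 : ℝ)) p := by
  simp only [indicator_apply, mem_ofPred_eq]
  rcases lt_trichotomy (u p) 0 with h | h | h
  · simp [hneg h, h.not_gt, h.not_ge]
  · simp [h, hc.1, hc.2]
  · simp [hpos h, h, h.le]

theorem stmt_2_general (N : ℕ) (T : ℝ)
    (u : EuclideanSpace ℝ (Fin N) × ℝ → ℝ)
    (uk : ℕ → EuclideanSpace ℝ (Fin N) × ℝ → ℝ)
    (ε : ℕ → ℝ)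
    (χk : ℕ → EuclideanSpace ℝ (Fin N) × ℝ → ℝ)
    (χ : EuclideanSpace ℝ (Fin N) × ℝ → ℝ)
    (S : Set (EuclideanSpace ℝ (Fin N) × ℝ))
    (hS : S = {p | p.2 ∈ Ioo 0 T})
    (hu : ContinuousOn u S)
    (hε0 : Tendsto ε atTop (𝓝 0))
    (hloc : TendstoLocallyUniformlyOn uk u atTop S)
    (hχkmeas : ∀ k, Measurable (χk k))
    (hχk01 : ∀ k p, 0 ≤ χk k p ∧ χk k p ≤ 1)
    (hχk1 : ∀ k, ∀ p ∈ S, 0 ≤ uk k p → χk k p = 1)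
    (hχk0 : ∀ k, ∀ p ∈ S, uk k p ≤ -ε k → χk k p = 0)
    (hχmeas : Measurable χ)
    (hχ01 : ∀ p, 0 ≤ χ p ∧ χ p ≤ 1)
    (hweak : ∀ φ : EuclideanSpace ℝ (Fin N) × ℝ → ℝ,
      Integrable φ (volume.restrict S) →
      Tendsto (fun k => ∫ p in S, φ p * χk k p) atTop
        (𝓝 (∫ p in S, φ p * χ p))) :
    ∀ᵐ p ∂(volume.restrict S),
      Set.indicator {q | 0 < u q} (fun _ => (1 : ℝ)) p ≤ χ p ∧
      χ p ≤ Set.indicator {q | 0 ≤ u q} (fun _ => (1 : ℝ)) p := by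
  have hSopen : IsOpen S := hS ▸ isOpen_Ioo.preimage continuous_snd
  have hχk_norm : ∀ k, ∀ᵐ p ∂(volume.restrict S), ‖χk k p‖ ≤ 1 := fun k =>
    .of_forall fun p => abs_le.2 ⟨by linarith [(hχk01 k p).1], (hχk01 k p).2⟩
  have hχ_norm : ∀ᵐ p ∂(volume.restrict S), ‖χ p‖ ≤ 1 :=
    .of_forall fun p => abs_le.2 ⟨by linarith [(hχ01 p).1], (hχ01 p).2⟩
  have hpos : ∀ᵐ p ∂(volume.restrict S), p ∈ S ∩ u ⁻¹' Ioi 0 → χ p = 1 :=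
    TendstoWeakStar.ae_eq_on_of_tendsto hweak (g := fun _ => 1)
      (fun k => (hχkmeas k).aestronglyMeasurable) hχk_norm hχmeas.aestronglyMeasurable hχ_norm
      (hu.isOpen_inter_preimage hSopen isOpen_Ioi).measurableSet fun p hp =>
        tendsto_one_of_tendsto_pos (hloc.tendsto_at hp.1) hp.2 fun k => hχk1 k p hp.1
  have hneg : ∀ᵐ p ∂(volume.restrict S), p ∈ S ∩ u ⁻¹' Iio 0 → χ p = 0 :=
    TendstoWeakStar.ae_eq_on_of_tendsto hweak (g := fun _ => 0)
      (fun k => (hχkmeas k).aestronglyMeasurable) hχk_norm hχmeas.aestronglyMeasurable hχ_norm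
      (hu.isOpen_inter_preimage hSopen isOpen_Iio).measurableSet fun p hp =>
        tendsto_zero_of_tendsto_neg (hloc.tendsto_at hp.1) hε0 hp.2 fun k => hχk0 k p hp.1
  filter_upwards [hpos, hneg, ae_restrict_mem hSopen.measurableSet] with p hp hn hpS
  exact indicator_pos_le_and_le_indicator_nonneg (hχ01 p) (fun h => hp ⟨hpS, h⟩)
    fun h => hn ⟨hpS, h⟩

/-- If continuous `uₖ → u` locally uniformly on `ℝ^N × (0,T)`, `εₖ > 0`
tends to `0`, the measurable functions `χₖ : ℝ^N × (0,T) → [0,1]` satisfy `χₖ = 1`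
where `uₖ ≥ 0` and `χₖ = 0` where `uₖ ≤ −εₖ`, and `χₖ ⇀ χ` weakly-* (tested against
all integrable `φ`), then `𝟙_{{u > 0}} ≤ χ ≤ 𝟙_{{u ≥ 0}}` almost everywhere. -/
theorem stmt_2 (N : ℕ) (hN : 1 ≤ N) (T : ℝ) (hT : 0 < T)
    (u : EuclideanSpace ℝ (Fin N) × ℝ → ℝ)
    (uk : ℕ → EuclideanSpace ℝ (Fin N) × ℝ → ℝ)
    (ε : ℕ → ℝ)
    (χk : ℕ → EuclideanSpace ℝ (Fin N) × ℝ → ℝ)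
    (χ : EuclideanSpace ℝ (Fin N) × ℝ → ℝ)
    (S : Set (EuclideanSpace ℝ (Fin N) × ℝ))
    (hS : S = {p | p.2 ∈ Ioo 0 T})
    (hu : ContinuousOn u S)
    (huk : ∀ k, ContinuousOn (uk k) S)
    (hε : ∀ k, 0 < ε k)
    (hε0 : Tendsto ε atTop (𝓝 0))
    (hloc : TendstoLocallyUniformlyOn uk u atTop S)
    (hχkmeas : ∀ k, Measurable (χk k))
    (hχk01 : ∀ k p, 0 ≤ χk k p ∧ χk k p ≤ 1)
    (hχk1 : ∀ k, ∀ p ∈ S, 0 ≤ uk k p → χk k p = 1)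
    (hχk0 : ∀ k, ∀ p ∈ S, uk k p ≤ -ε k → χk k p = 0)
    (hχmeas : Measurable χ)
    (hχ01 : ∀ p, 0 ≤ χ p ∧ χ p ≤ 1)
    (hweak : ∀ φ : EuclideanSpace ℝ (Fin N) × ℝ → ℝ,
      Integrable φ (volume.restrict S) →
      Tendsto (fun k => ∫ p in S, φ p * χk k p) atTop
        (𝓝 (∫ p in S, φ p * χ p))) :
    ∀ᵐ p ∂(volume.restrict S),
      Set.indicator {q | 0 < u q} (fun _ => (1 : ℝ)) p ≤ χ p ∧
      χ p ≤ Set.indicator {q | 0 ≤ u q} (fun _ => (1 : ℝ)) p :=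
  stmt_2_general N T u uk ε χk χ S hS hu hε0 hloc hχkmeas hχk01 hχk1 hχk0 hχmeas hχ01 hweak
end

section
/- Let τ > 0, let g : [0, τ] → [0, ∞) be continuous with g(0) = 0, and let h : [0, τ] → [0, ∞) be Lebesgue integrable. If g(t) ≤ h(t) ∫₀^t g(s) ds for almost every t ∈ [0, τ], then g ≡ 0 on [0, τ]. -/
open MeasureTheory

lemma gronwall_step (τ : ℝ) (g h : ℝ → ℝ)
    (hg : ContinuousOn g (Set.Icc 0 τ))
    (hgpos : ∀ t ∈ Set.Icc (0:ℝ) τ, 0 ≤ g t)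
    (hh : IntegrableOn h (Set.Icc 0 τ))
    (hhpos : ∀ t ∈ Set.Icc (0:ℝ) τ, 0 ≤ h t)
    (hineq : ∀ᵐ t ∂(volume.restrict (Set.Icc 0 τ)),
      g t ≤ h t * ∫ s in (0:ℝ)..t, g s)
    (a b : ℝ) (ha : 0 ≤ a) (hab : a < b) (hbτ : b ≤ τ)
    (hga : ∀ s ∈ Set.Icc (0:ℝ) a, g s = 0)
    (hH : ∫ s in Set.Icc a b, h s ≤ 1/2) :
    ∀ s ∈ Set.Icc (0:ℝ) b, g s = 0 := by
  have haτ : a ≤ τ := hab.le.trans hbτ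
  have hgint : IntegrableOn g (Set.Icc 0 τ) := hg.integrableOn_Icc
  have hsub : Set.Icc a b ⊆ Set.Icc (0:ℝ) τ := Set.Icc_subset_Icc ha hbτ
  have hgab : IntervalIntegrable g volume a b :=
    (hg.mono hsub).intervalIntegrable_of_Icc hab.le
  set G := ∫ s in a..b, g s with hGdef
  have hG0 : 0 ≤ G :=
    intervalIntegral.integral_nonneg hab.le (fun u hu => hgpos u (hsub hu))
  -- a.e. bound on Icc a b
  have key : ∀ᵐ t ∂(volume.restrict (Set.Icc a b)), g t ≤ h t * G := by
    have h1 : ∀ᵐ t ∂(volume.restrict (Set.Icc a b)),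
        g t ≤ h t * ∫ s in (0:ℝ)..t, g s :=
      ae_restrict_of_ae_restrict_of_subset hsub hineq
    filter_upwards [h1, ae_restrict_mem measurableSet_Icc] with t ht htmem
    have h0a : (∫ s in (0:ℝ)..a, g s) = 0 := by
      have heq : Set.EqOn g 0 (Set.uIcc 0 a) := by
        intro s hs
        rw [Set.uIcc_of_le ha] at hs
        exact hga s hs
      rw [intervalIntegral.integral_congr heq]
      simp
    have hgat : IntervalIntegrable g volume a t :=
      ((hg.mono (Set.Icc_subset_Icc ha (htmem.2.trans hbτ))).intervalIntegrable_of_Icc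
        htmem.1)
    have h0t : (∫ s in (0:ℝ)..t, g s) = ∫ s in a..t, g s := by
      rw [← intervalIntegral.integral_add_adjacent_intervals
        ((hg.mono (Set.Icc_subset_Icc le_rfl haτ)).intervalIntegrable_of_Icc ha) hgat, h0a,
        zero_add]
    have hmono : (∫ s in a..t, g s) ≤ G := by
      apply intervalIntegral.integral_mono_interval le_rfl htmem.1 htmem.2 _ hgab
      filter_upwards [ae_restrict_mem measurableSet_Ioc] with u hu
      exact hgpos u (hsub ⟨hu.1.le, hu.2⟩)
    calc g t ≤ h t * ∫ s in (0:ℝ)..t, g s := ht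
      _ = h t * ∫ s in a..t, g s := by rw [h0t]
      _ ≤ h t * G := mul_le_mul_of_nonneg_left hmono (hhpos t (hsub htmem))
  -- integrate the bound
  have hGle : G ≤ (1/2) * G := by
    have hInt1 : IntegrableOn g (Set.Icc a b) := hgint.mono_set hsub
    have hInt2 : IntegrableOn (fun t => h t * G) (Set.Icc a b) :=
      (hh.mono_set hsub).mul_const G
    have : (∫ t in Set.Icc a b, g t) ≤ ∫ t in Set.Icc a b, h t * G :=
      integral_mono_ae hInt1 hInt2 key
    have hGeq : G = ∫ t in Set.Icc a b, g t := by
      rw [hGdef, intervalIntegral.integral_of_le hab.le,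
        MeasureTheory.integral_Icc_eq_integral_Ioc]
    calc G = ∫ t in Set.Icc a b, g t := hGeq
      _ ≤ ∫ t in Set.Icc a b, h t * G := this
      _ = (∫ t in Set.Icc a b, h t) * G := by rw [integral_mul_const]
      _ ≤ (1/2) * G := mul_le_mul_of_nonneg_right hH hG0
  have hGzero : G = 0 := le_antisymm (by linarith) hG0
  -- deduce g = 0 on [a,b]
  have hab0 : ∀ s ∈ Set.Icc a b, g s = 0 := by
    intro s hs
    by_contra hne
    have hpos : 0 < g s := lt_of_le_of_ne (hgpos s (hsub hs)) (Ne.symm hne)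
    have : 0 < G :=
      intervalIntegral.integral_pos hab (hg.mono hsub)
        (fun x hx => hgpos x (hsub ⟨hx.1.le, hx.2⟩)) ⟨s, hs, hpos⟩
    linarith
  intro s hs
  rcases le_or_gt s a with h' | h'
  · exact hga s ⟨hs.1, h'⟩
  · exact hab0 s ⟨h'.le, hs.2⟩

/-- Gronwall-type inequality with integrable coefficient: if
`g : [0,τ] → [0,∞)` is continuous with `g(0) = 0`, `h : [0,τ] → [0,∞)` is Lebesgue
integrable, and `g(t) ≤ h(t) ∫₀^t g(s) ds` for a.e. `t ∈ [0,τ]`, then `g ≡ 0`. -/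
theorem stmt_4 (τ : ℝ) (hτ : 0 < τ) (g h : ℝ → ℝ)
    (hg : ContinuousOn g (Set.Icc 0 τ))
    (hgpos : ∀ t ∈ Set.Icc (0:ℝ) τ, 0 ≤ g t)
    (hg0 : g 0 = 0)
    (hh : IntegrableOn h (Set.Icc 0 τ))
    (hhpos : ∀ t ∈ Set.Icc (0:ℝ) τ, 0 ≤ h t)
    (hineq : ∀ᵐ t ∂(volume.restrict (Set.Icc 0 τ)),
      g t ≤ h t * ∫ s in (0:ℝ)..t, g s) :
    ∀ t ∈ Set.Icc (0:ℝ) τ, g t = 0 := by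
  set S : Set ℝ := {t | t ∈ Set.Icc (0:ℝ) τ ∧ ∀ s ∈ Set.Icc (0:ℝ) t, g s = 0} with hSdef
  have h0S : (0:ℝ) ∈ S := by
    refine ⟨⟨le_rfl, hτ.le⟩, fun s hs => ?_⟩
    rw [Set.Icc_self, Set.mem_singleton_iff] at hs
    rw [hs, hg0]
  have hSne : S.Nonempty := ⟨0, h0S⟩
  have hSbdd : BddAbove S := ⟨τ, fun t ht => ht.1.2⟩
  set c := sSup S with hcdef
  have hc0 : 0 ≤ c := le_csSup hSbdd h0S
  have hcτ : c ≤ τ := csSup_le hSne (fun t ht => ht.1.2)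
  -- g = 0 on [0, c]
  have hzero : ∀ s ∈ Set.Icc (0:ℝ) c, g s = 0 := by
    have hlt : ∀ s, 0 ≤ s → s < c → g s = 0 := by
      intro s hs0 hsc
      obtain ⟨t, htS, hst⟩ := exists_lt_of_lt_csSup hSne hsc
      exact htS.2 s ⟨hs0, hst.le⟩
    have hgc : g c = 0 := by
      rcases eq_or_lt_of_le hc0 with h0 | h0
      · rw [← h0, hg0]
      · have hcont : ContinuousWithinAt g (Set.Ico 0 c) c :=
          (hg c ⟨hc0, hcτ⟩).mono (Set.Ico_subset_Icc_self.trans (Set.Icc_subset_Icc le_rfl hcτ))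
        have hne : (nhdsWithin c (Set.Ico 0 c)).NeBot := by
          rw [← mem_closure_iff_nhdsWithin_neBot, closure_Ico h0.ne]
          exact ⟨hc0, le_rfl⟩
        have htend : Filter.Tendsto g (nhdsWithin c (Set.Ico 0 c)) (nhds (g c)) := hcont
        have htend0 : Filter.Tendsto g (nhdsWithin c (Set.Ico 0 c)) (nhds 0) := by
          apply Filter.Tendsto.congr' _ tendsto_const_nhds
          filter_upwards [self_mem_nhdsWithin] with u hu
          exact (hlt u hu.1 hu.2).symm
        exact tendsto_nhds_unique htend htend0
    intro s hs
    rcases lt_or_eq_of_le hs.2 with h' | h'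
    · exact hlt s hs.1 h'
    · rw [h']; exact hgc
  -- c = τ
  rcases eq_or_lt_of_le hcτ with hceq | hclt
  · intro t ht
    exact hzero t ⟨ht.1, ht.2.trans_eq hceq.symm⟩
  · exfalso
    -- find b ∈ (c, τ] with ∫ over Icc c b of h ≤ 1/2
    have hhint : IntervalIntegrable h volume c τ := by
      rw [intervalIntegrable_iff]
      exact hh.mono_set (Set.uIoc_of_le hcτ ▸ Set.Ioc_subset_Icc_self.trans
        (Set.Icc_subset_Icc hc0 le_rfl))
    have hcont : ContinuousWithinAt (fun b => ∫ s in c..b, h s) (Set.Ioc c τ) c := by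
      apply (intervalIntegral.continuousWithinAt_primitive (measure_singleton c) _).mono
        Set.Ioc_subset_Icc_self
      rw [min_self, max_eq_right hcτ]
      exact hhint
    have hne : (nhdsWithin c (Set.Ioc c τ)).NeBot := by
      rw [← mem_closure_iff_nhdsWithin_neBot, closure_Ioc hclt.ne]
      exact ⟨le_rfl, hcτ⟩
    have hF0 : (∫ s in c..c, h s) = 0 := intervalIntegral.integral_same
    have hev : ∀ᶠ b in nhdsWithin c (Set.Ioc c τ), (∫ s in c..b, h s) < 1/2 := by
      have := hcont.tendsto
      rw [hF0] at this
      exact this (Iio_mem_nhds (by norm_num))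
    obtain ⟨b, hblt, hbmem⟩ := (hev.and self_mem_nhdsWithin).exists
    have hint_eq : (∫ s in Set.Icc c b, h s) = ∫ s in c..b, h s := by
      rw [intervalIntegral.integral_of_le hbmem.1.le, MeasureTheory.integral_Icc_eq_integral_Ioc]
    have hb0 : ∀ s ∈ Set.Icc (0:ℝ) b, g s = 0 :=
      gronwall_step τ g h hg hgpos hh hhpos hineq c b hc0 hbmem.1 hbmem.2 hzero
        (by rw [hint_eq]; linarith)
    have hbS : b ∈ S := ⟨⟨hc0.trans hbmem.1.le, hbmem.2⟩, hb0⟩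
    exact absurd (le_csSup hSbdd hbS) (not_le.mpr hbmem.1)
end

section
/- Let N ≥ 1, let 0 < δ ≤ M₁ and L₁ ≥ 0 be constants, and let c : ℝ^N × [0, ∞) → ℝ be continuous with δ ≤ c(x,t) ≤ M₁ and |c(x,t) − c(y,t)| ≤ L₁ |x − y| for all x, y ∈ ℝ^N and t ≥ 0. Let K₀ ⊂ ℝ^N be nonempty, and define the minimal time function w(x) = inf{ t ≥ 0 : there exists an absolutely continuous y : [0,t] → ℝ^N with y(0) ∈ K₀, y(t) = x, and |ẏ(s)| ≤ c(y(s), s) for almost every s ∈ [0,t] }. Then w(x) is finite for every x ∈ ℝ^N and w is Lipschitz continuous with constant 1/δ, i.e. |w(x) − w(x′)| ≤ |x − x′| / δ for all x, x′ ∈ ℝ^N. -/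
/-!
Any trajectory reaching `x'` at time `t` can be continued along the segment `[x', x]` at
speed `δ ≤ c`, reaching `x` at time `t + ‖x - x'‖ / δ`. Gluing the two integral inequalities
needs `s ↦ c (y s) s` to be integrable along the first trajectory; this holds because
`c ≤ M₁` makes every admissible trajectory `M₁`-Lipschitz, hence continuous. Starting from a
point of `K₀` at time `0` shows that every point is reachable, and taking infima gives
`w x ≤ w x' + ‖x - x'‖ / δ`.
-/

open MeasureTheory Set
open scoped NNReal

section Admissible

variable {E : Type*} [NormedAddCommGroup E] {c : E → ℝ → ℝ} {y z : ℝ → E}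
  {a b d : ℝ}

def AdmissibleOn (c : E → ℝ → ℝ) (y : ℝ → E) (a b : ℝ) : Prop :=
  ∀ s₁ s₂ : ℝ, a ≤ s₁ → s₁ ≤ s₂ → s₂ ≤ b → ‖y s₂ - y s₁‖ ≤ ∫ s in s₁..s₂, c (y s) s

def reachingTimes (K₀ : Set E) (c : E → ℝ → ℝ) (x : E) : Set ℝ :=
  {t : ℝ | 0 ≤ t ∧ ∃ y : ℝ → E, y 0 ∈ K₀ ∧ y t = x ∧ AdmissibleOn c y 0 t}

theorem ContinuousOn.intervalIntegrable_comp_path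
    (hc : ContinuousOn (fun p : E × ℝ => c p.1 p.2) (univ ×ˢ Ici 0))
    (ha : 0 ≤ a) (hab : a ≤ b) (hy : ContinuousOn y (Icc a b)) :
    IntervalIntegrable (fun s => c (y s) s) volume a b :=
  ContinuousOn.intervalIntegrable_of_Icc hab <|
    hc.comp (hy.prodMk continuousOn_id) fun _ hs => ⟨mem_univ _, ha.trans hs.1⟩

theorem AdmissibleOn.congr (hy : AdmissibleOn c y a b) (hyz : EqOn y z (Icc a b)) :
    AdmissibleOn c z a b := by
  intro s₁ s₂ h₁ h₁₂ h₂
  have hsub : uIcc s₁ s₂ ⊆ Icc a b := by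
    rw [uIcc_of_le h₁₂]; exact Icc_subset_Icc h₁ h₂
  rw [← hyz (hsub right_mem_uIcc), ← hyz (hsub left_mem_uIcc),
    intervalIntegral.integral_congr (g := fun s => c (y s) s) fun s hs => by
      rw [← hyz (hsub hs)]]
  exact hy s₁ s₂ h₁ h₁₂ h₂

theorem AdmissibleOn.trans (hab : AdmissibleOn c y a b) (hbd : AdmissibleOn c y b d)
    (hia : IntervalIntegrable (fun s => c (y s) s) volume a b)
    (hid : IntervalIntegrable (fun s => c (y s) s) volume b d) :
    AdmissibleOn c y a d := by
  intro s₁ s₂ h₁ h₁₂ h₂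
  rcases le_total s₂ b with hs₂ | hs₂
  · exact hab s₁ s₂ h₁ h₁₂ hs₂
  rcases le_total b s₁ with hs₁ | hs₁
  · exact hbd s₁ s₂ hs₁ h₁₂ h₂
  have hi₁ := hia.mono_set (by rw [uIcc_of_le hs₁, uIcc_of_le (h₁.trans hs₁)]; gcongr)
  have hi₂ := hid.mono_set (by rw [uIcc_of_le hs₂, uIcc_of_le (hs₂.trans h₂)]; gcongr)
  calc ‖y s₂ - y s₁‖ ≤ ‖y s₂ - y b‖ + ‖y b - y s₁‖ := norm_sub_le_norm_sub_add_norm_sub _ _ _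
    _ ≤ (∫ s in b..s₂, c (y s) s) + ∫ s in s₁..b, c (y s) s :=
      add_le_add (hbd b s₂ le_rfl hs₂ h₂) (hab s₁ b h₁ hs₁ le_rfl)
    _ = ∫ s in s₁..s₂, c (y s) s := by
      rw [add_comm, intervalIntegral.integral_add_adjacent_intervals hi₁ hi₂]

theorem AdmissibleOn.lipschitzOnWith {M : ℝ≥0} (hy : AdmissibleOn c y a b)
    (hM : ∀ s ∈ Icc a b, ‖c (y s) s‖ ≤ M) : LipschitzOnWith M y (Icc a b) := by
  refine LipschitzOnWith.of_dist_le_mul fun u hu v hv => ?_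
  wlog huv : u ≤ v generalizing u v
  · rw [dist_comm, dist_comm u]; exact this v hv u hu (le_of_not_ge huv)
  rw [dist_comm, dist_eq_norm, Real.dist_eq, abs_sub_comm]
  calc ‖y v - y u‖ ≤ ∫ s in u..v, c (y s) s := hy u v hu.1 huv hv.2
    -- valid even without integrability, where the integral is `0`
    _ ≤ ‖∫ s in u..v, c (y s) s‖ := Real.le_norm_self _
    _ ≤ M * |v - u| := intervalIntegral.norm_integral_le_of_norm_le_const fun s hs =>
      hM s (Icc_subset_Icc hu.1 hv.2 (uIoc_subset_uIcc.trans (uIcc_of_le huv).subset hs))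

theorem admissibleOn_of_lipschitzWith {δ : ℝ≥0}
    (hc : ContinuousOn (fun p : E × ℝ => c p.1 p.2) (univ ×ˢ Ici 0))
    (hδc : ∀ x s, 0 ≤ s → δ ≤ c x s) (hy : LipschitzWith δ y) (ha : 0 ≤ a) :
    AdmissibleOn c y a b := by
  intro s₁ s₂ h₁ h₁₂ _
  calc ‖y s₂ - y s₁‖ = dist (y s₂) (y s₁) := (dist_eq_norm _ _).symm
    _ ≤ δ * (s₂ - s₁) := by
      simpa [Real.dist_eq, abs_of_nonneg (sub_nonneg.2 h₁₂)] using hy.dist_le_mul s₂ s₁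
    _ = ∫ _ in s₁..s₂, (δ : ℝ) := by simp [mul_comm]
    _ ≤ ∫ s in s₁..s₂, c (y s) s :=
      intervalIntegral.integral_mono_on h₁₂ intervalIntegrable_const
        (hc.intervalIntegrable_comp_path (ha.trans h₁) h₁₂ hy.continuous.continuousOn)
        fun s hs => hδc _ _ (ha.trans (h₁.trans hs.1))

end Admissible

section MinimalTime

variable {E : Type*} [NormedAddCommGroup E] {K₀ : Set E} {c : E → ℝ → ℝ}

theorem zero_mem_reachingTimes {x : E} (hx : x ∈ K₀) : 0 ∈ reachingTimes K₀ c x := by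
  refine ⟨le_rfl, fun _ => x, hx, rfl, fun s₁ s₂ h₁ h₁₂ h₂ => ?_⟩
  obtain rfl : s₁ = s₂ := le_antisymm h₁₂ (h₂.trans h₁)
  simp

theorem add_mem_reachingTimes [NormedSpace ℝ E] {δ : ℝ} {M : ℝ≥0} (hδ : 0 < δ)
    (hc : ContinuousOn (fun p : E × ℝ => c p.1 p.2) (univ ×ˢ Ici 0))
    (hδc : ∀ x s, 0 ≤ s → δ ≤ c x s) (hcM : ∀ x s, 0 ≤ s → ‖c x s‖ ≤ M)
    {x x' : E} {t : ℝ} (ht : t ∈ reachingTimes K₀ c x') :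
    t + ‖x - x'‖ / δ ∈ reachingTimes K₀ c x := by
  obtain ⟨ht₀, y, hy₀, hyt, hy⟩ := ht
  set T := t + ‖x - x'‖ / δ
  have htT : t ≤ T := le_add_of_nonneg_right (by positivity)
  set v := (δ / ‖x - x'‖) • (x - x')
  set ℓ : ℝ → E := fun s => x' + (s - t) • v
  have hv : ‖v‖ ≤ δ := by
    rcases eq_or_ne x x' with rfl | hne
    · simpa [v] using hδ.le
    · rw [norm_smul, Real.norm_of_nonneg (by positivity),
        div_mul_cancel₀ _ (norm_ne_zero_iff.2 (sub_ne_zero.2 hne))]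
  have hℓ : LipschitzWith ‖v‖₊ ℓ := LipschitzWith.of_dist_le_mul fun s₁ s₂ => by
    simp [ℓ, dist_eq_norm, ← sub_smul, norm_smul, mul_comm]
  have hℓT : ℓ T = x := by
    rcases eq_or_ne x x' with rfl | hne
    · simp [ℓ, v]
    · have : ‖x - x'‖ ≠ 0 := norm_ne_zero_iff.2 (sub_ne_zero.2 hne)
      simp only [ℓ, v, T, add_sub_cancel_left, smul_smul]
      rw [div_mul_div_cancel₀ hδ.ne', div_self this, one_smul, add_sub_cancel]
  set f : ℝ → E := fun s => if s ≤ t then y s else ℓ s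
  have hfy : EqOn y f (Icc 0 t) := fun s hs => (if_pos hs.2).symm
  have hfℓ : EqOn ℓ f (Icc t T) := fun s hs => by
    rcases hs.1.eq_or_lt with rfl | hlt
    · simp [f, ℓ, hyt]
    · simp [f, not_le.2 hlt]
  have hyc : ContinuousOn y (Icc 0 t) :=
    (hy.lipschitzOnWith fun s hs => hcM _ _ hs.1).continuousOn
  refine ⟨ht₀.trans htT, f, hfy ⟨le_rfl, ht₀⟩ ▸ hy₀, hfℓ ⟨htT, le_rfl⟩ ▸ hℓT, ?_⟩
  refine (hy.congr hfy).trans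
    ((admissibleOn_of_lipschitzWith (δ := ‖v‖₊) hc (fun x s hs => hv.trans (hδc x s hs)) hℓ ht₀).congr hfℓ)
    (hc.intervalIntegrable_comp_path le_rfl ht₀ (hyc.congr hfy.symm))
    (hc.intervalIntegrable_comp_path ht₀ htT (hℓ.continuous.continuousOn.congr hfℓ.symm))

end MinimalTime

theorem csInf_le_csInf_add {A B : Set ℝ} {d : ℝ} (hA : BddBelow A) (hB : B.Nonempty)
    (h : ∀ τ ∈ B, τ + d ∈ A) : sInf A ≤ sInf B + d := by
  have : sInf A - d ≤ sInf B := le_csInf hB fun τ hτ => by linarith [csInf_le hA (h τ hτ)]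
  linarith

theorem stmt_9_general (N : ℕ)
    (δ M₁ : ℝ) (hδ : 0 < δ)
    (c : EuclideanSpace ℝ (Fin N) → ℝ → ℝ)
    (hc : ContinuousOn (fun p : EuclideanSpace ℝ (Fin N) × ℝ => c p.1 p.2)
      (Set.univ ×ˢ Set.Ici 0))
    (hcb : ∀ x : EuclideanSpace ℝ (Fin N), ∀ t : ℝ, 0 ≤ t → δ ≤ c x t ∧ c x t ≤ M₁)
    (K₀ : Set (EuclideanSpace ℝ (Fin N))) (hK₀ : K₀.Nonempty)
    (w : EuclideanSpace ℝ (Fin N) → ℝ)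
    (hw : ∀ x, w x = sInf {t : ℝ | 0 ≤ t ∧
      ∃ y : ℝ → EuclideanSpace ℝ (Fin N), y 0 ∈ K₀ ∧ y t = x ∧
        ∀ s₁ s₂ : ℝ, 0 ≤ s₁ → s₁ ≤ s₂ → s₂ ≤ t →
          ‖y s₂ - y s₁‖ ≤ ∫ s in s₁..s₂, c (y s) s}) :
    (∀ x : EuclideanSpace ℝ (Fin N), {t : ℝ | 0 ≤ t ∧
      ∃ y : ℝ → EuclideanSpace ℝ (Fin N), y 0 ∈ K₀ ∧ y t = x ∧
        ∀ s₁ s₂ : ℝ, 0 ≤ s₁ → s₁ ≤ s₂ → s₂ ≤ t →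
          ‖y s₂ - y s₁‖ ≤ ∫ s in s₁..s₂, c (y s) s}.Nonempty) ∧
    (∀ x x' : EuclideanSpace ℝ (Fin N), |w x - w x'| ≤ ‖x - x'‖ / δ) := by
  have hcM : ∀ x s, 0 ≤ s → ‖c x s‖ ≤ M₁.toNNReal := fun x s hs => by
    obtain ⟨hδc, hcM⟩ := hcb x s hs
    rw [Real.norm_of_nonneg (hδ.le.trans hδc)]
    exact hcM.trans (Real.le_coe_toNNReal M₁)
  have hreach : ∀ x x', ∀ t ∈ reachingTimes K₀ c x', t + ‖x - x'‖ / δ ∈ reachingTimes K₀ c x :=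
    fun _ _ _ => add_mem_reachingTimes hδ hc (fun x s hs => (hcb x s hs).1) hcM
  have hne : ∀ x, (reachingTimes K₀ c x).Nonempty := fun x => by
    obtain ⟨x₀, hx₀⟩ := hK₀
    exact ⟨_, hreach x x₀ 0 (zero_mem_reachingTimes hx₀)⟩
  have hw_le : ∀ x x', w x ≤ w x' + ‖x - x'‖ / δ := fun x x' => by
    rw [hw x, hw x']
    exact csInf_le_csInf_add ⟨0, fun _ ht => ht.1⟩ (hne x') (hreach x x')
  refine ⟨hne, fun x x' => abs_sub_le_iff.2 ⟨?_, ?_⟩⟩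
  · linarith [hw_le x x']
  · rw [norm_sub_rev]; linarith [hw_le x' x]

/-- Let `c : ℝ^N × [0,∞) → ℝ` be continuous with `δ ≤ c ≤ M₁`
(`0 < δ ≤ M₁`) and `L₁`-Lipschitz in space, `K₀ ⊆ ℝ^N` nonempty, and let
`w(x)` be the minimal time to reach `x` from `K₀` along absolutely continuous
trajectories with `|ẏ(s)| ≤ c(y(s), s)` a.e. (encoded by the equivalent metric
condition `‖y(s₂) − y(s₁)‖ ≤ ∫_{s₁}^{s₂} c(y(s), s) ds`). Then `w(x)` is finite
for every `x` and `w` is `1/δ`-Lipschitz. -/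
theorem stmt_9 (N : ℕ) (hN : 1 ≤ N)
    (δ M₁ L₁ : ℝ) (hδ : 0 < δ) (hδM : δ ≤ M₁) (hL₁ : 0 ≤ L₁)
    (c : EuclideanSpace ℝ (Fin N) → ℝ → ℝ)
    (hc : ContinuousOn (fun p : EuclideanSpace ℝ (Fin N) × ℝ => c p.1 p.2)
      (Set.univ ×ˢ Set.Ici 0))
    (hcb : ∀ x : EuclideanSpace ℝ (Fin N), ∀ t : ℝ, 0 ≤ t → δ ≤ c x t ∧ c x t ≤ M₁)
    (hcl : ∀ x y : EuclideanSpace ℝ (Fin N), ∀ t : ℝ, 0 ≤ t →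
      |c x t - c y t| ≤ L₁ * ‖x - y‖)
    (K₀ : Set (EuclideanSpace ℝ (Fin N))) (hK₀ : K₀.Nonempty)
    (w : EuclideanSpace ℝ (Fin N) → ℝ)
    (hw : ∀ x, w x = sInf {t : ℝ | 0 ≤ t ∧
      ∃ y : ℝ → EuclideanSpace ℝ (Fin N), y 0 ∈ K₀ ∧ y t = x ∧
        ∀ s₁ s₂ : ℝ, 0 ≤ s₁ → s₁ ≤ s₂ → s₂ ≤ t →
          ‖y s₂ - y s₁‖ ≤ ∫ s in s₁..s₂, c (y s) s}) :
    (∀ x : EuclideanSpace ℝ (Fin N), {t : ℝ | 0 ≤ t ∧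
      ∃ y : ℝ → EuclideanSpace ℝ (Fin N), y 0 ∈ K₀ ∧ y t = x ∧
        ∀ s₁ s₂ : ℝ, 0 ≤ s₁ → s₁ ≤ s₂ → s₂ ≤ t →
          ‖y s₂ - y s₁‖ ≤ ∫ s in s₁..s₂, c (y s) s}.Nonempty) ∧
    (∀ x x' : EuclideanSpace ℝ (Fin N), |w x - w x'| ≤ ‖x - x'‖ / δ) :=
  stmt_9_general N δ M₁ hδ c hc hcb K₀ hK₀ w hw
end

section
/- Let C > 0, δ > 0, ε > 0 and α ∈ (0, 1) with C² √α ≤ δ/2. Let x̄, ȳ ∈ ℝ^N satisfy |x̄| ≤ C/√α, |ȳ| ≤ C/√α, |x̄ − ȳ| ≤ C and |x̄ − ȳ|² / ε² ≥ δ. Then every x ∈ ℝ^N with |x − ȳ|² ≥ (1/2)( |x̄|² + |ȳ|² ) + |x̄ − ȳ|² / (2 α ε²) satisfies |x| ≥ (1/√α) ( −C + √( C² + δ/2 − C² √α ) ). In particular this lower bound tends to +∞ as α → 0. -/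
/-!
Write `s = √α`. Since `‖x̄ - ȳ‖² / ε² ≥ δ`, the hypothesis on `x` gives
`s² ‖x - ȳ‖² ≥ s² (‖x̄‖² + ‖ȳ‖²) / 2 + δ / 2`, and `‖x - ȳ‖ ≤ ‖x‖ + ‖ȳ‖`. Expanding, the cross
term `2 s‖x‖ · s‖ȳ‖` is at most `2 C s‖x‖`, and the mismatch `s² (‖ȳ‖² - ‖x̄‖²) / 2` is at most
`C² s` because `‖ȳ‖ - ‖x̄‖ ≤ C` and `s (‖x̄‖ + ‖ȳ‖) ≤ 2C`. Together this is
`(s ‖x‖ + C)² ≥ C² + δ / 2 - C² s`. As `α → 0` the square root tends to `√(C² + δ/2) > C`,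
so the bound behaves like a positive constant times `1/√α`.
-/

open Filter Topology

theorem sq_mul_sq_norm_sub_sq_norm_le {E : Type*} [SeminormedAddCommGroup E] {s C : ℝ}
    (hs : 0 ≤ s) {x y : E} (hx : s * ‖x‖ ≤ C) (hy : s * ‖y‖ ≤ C) (hxy : ‖x - y‖ ≤ C) :
    s ^ 2 * (‖y‖ ^ 2 - ‖x‖ ^ 2) ≤ 2 * C ^ 2 * s := by
  have hdiff : ‖y‖ - ‖x‖ ≤ C := (norm_sub_norm_le y x).trans (norm_sub_rev y x ▸ hxy)
  calc s ^ 2 * (‖y‖ ^ 2 - ‖x‖ ^ 2) = s * (‖y‖ - ‖x‖) * (s * ‖y‖ + s * ‖x‖) := by ring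
    _ ≤ s * C * (s * ‖y‖ + s * ‖x‖) := by gcongr
    _ ≤ s * C * (C + C) := by
        have hC : 0 ≤ C := (norm_nonneg _).trans hxy
        gcongr
    _ = 2 * C ^ 2 * s := by ring

theorem sqrt_le_mul_norm_add_of_le_norm_sub_sq {E : Type*} [SeminormedAddCommGroup E]
    {s C δ : ℝ} (hs : 0 < s) {x xb yb : E} (hxb : s * ‖xb‖ ≤ C) (hyb : s * ‖yb‖ ≤ C)
    (hxy : ‖xb - yb‖ ≤ C) (hx : (‖xb‖ ^ 2 + ‖yb‖ ^ 2) / 2 + δ / (2 * s ^ 2) ≤ ‖x - yb‖ ^ 2) :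
    √(C ^ 2 + δ / 2 - C ^ 2 * s) ≤ s * ‖x‖ + C := by
  have hC : 0 ≤ C := (norm_nonneg _).trans hxy
  have hscaled : s ^ 2 * (‖xb‖ ^ 2 + ‖yb‖ ^ 2) / 2 + δ / 2 ≤ (s * ‖x‖ + s * ‖yb‖) ^ 2 := by
    have htri : ‖x - yb‖ ^ 2 ≤ (‖x‖ + ‖yb‖) ^ 2 := by
      gcongr
      exact norm_sub_le x yb
    have := mul_le_mul_of_nonneg_left (hx.trans htri) (sq_nonneg s)
    field_simp at this ⊢
    linarith
  have hcross : s * ‖x‖ * (s * ‖yb‖) ≤ s * ‖x‖ * C := by gcongr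
  have hdiff := sq_mul_sq_norm_sub_sq_norm_le hs.le hxb hyb hxy
  refine Real.sqrt_le_iff.2 ⟨by positivity, ?_⟩
  linarith

theorem neg_add_sqrt_sq_add_pos (C : ℝ) {δ : ℝ} (hδ : 0 < δ) : 0 < -C + √(C ^ 2 + δ) := by
  have : |C| < √(C ^ 2 + δ) := by
    rw [← Real.sqrt_sq_eq_abs]
    exact Real.sqrt_lt_sqrt (sq_nonneg C) (by linarith)
  linarith [le_abs_self C]

theorem tendsto_one_div_sqrt_nhdsGT_zero : Tendsto (fun a : ℝ => 1 / √a) (𝓝[>] 0) atTop := by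
  simp only [one_div]
  refine tendsto_inv_nhdsGT_zero.comp (tendsto_nhdsWithin_iff.2 ⟨?_, ?_⟩)
  · simpa using (Real.continuous_sqrt.tendsto 0).mono_left nhdsWithin_le_nhds
  · filter_upwards [self_mem_nhdsWithin] with a ha using Real.sqrt_pos.2 ha

theorem stmt_11_general (N : ℕ)
    (C δ ε α : ℝ) (hδ : 0 < δ)
    (hα : 0 < α)
    (xb yb : EuclideanSpace ℝ (Fin N))
    (hxb : ‖xb‖ ≤ C / Real.sqrt α) (hyb : ‖yb‖ ≤ C / Real.sqrt α)
    (hxy : ‖xb - yb‖ ≤ C) (hlow : δ ≤ ‖xb - yb‖ ^ 2 / ε ^ 2) :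
    (∀ x : EuclideanSpace ℝ (Fin N),
      (1 / 2) * (‖xb‖ ^ 2 + ‖yb‖ ^ 2) + ‖xb - yb‖ ^ 2 / (2 * α * ε ^ 2) ≤ ‖x - yb‖ ^ 2 →
      (1 / Real.sqrt α) * (-C + Real.sqrt (C ^ 2 + δ / 2 - C ^ 2 * Real.sqrt α)) ≤ ‖x‖) ∧
    Filter.Tendsto
      (fun a : ℝ =>
        (1 / Real.sqrt a) * (-C + Real.sqrt (C ^ 2 + δ / 2 - C ^ 2 * Real.sqrt a)))
      (nhdsWithin 0 (Set.Ioi 0)) Filter.atTop := by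
  refine ⟨fun x hx => ?_, ?_⟩
  · have hs : 0 < √α := Real.sqrt_pos.2 hα
    have hpenalty : δ / (2 * √α ^ 2) ≤ ‖xb - yb‖ ^ 2 / (2 * α * ε ^ 2) := by
      rw [Real.sq_sqrt hα.le, div_mul_eq_div_div_swap (‖xb - yb‖ ^ 2)]
      exact div_le_div_of_nonneg_right hlow (by positivity)
    have key : √(C ^ 2 + δ / 2 - C ^ 2 * √α) ≤ √α * ‖x‖ + C :=
      sqrt_le_mul_norm_add_of_le_norm_sub_sq hs ((le_div_iff₀' hs).1 hxb)
        ((le_div_iff₀' hs).1 hyb) hxy (by linarith)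
    rw [one_div, inv_mul_le_iff₀ hs]
    linarith
  · refine tendsto_one_div_sqrt_nhdsGT_zero.atTop_mul_pos
      (neg_add_sqrt_sq_add_pos C (half_pos hδ)) ?_
    have hcont : Continuous fun a : ℝ => -C + √(C ^ 2 + δ / 2 - C ^ 2 * √a) := by fun_prop
    simpa using (hcont.tendsto 0).mono_left nhdsWithin_le_nhds

/-- Quantitative localization: under `C, δ, ε > 0`, `α ∈ (0,1)` with
`C²√α ≤ δ/2`, if `|xb|, |yb| ≤ C/√α`, `|xb − yb| ≤ C` and `|xb − yb|²/ε² ≥ δ`, then any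
`x` with `|x − yb|² ≥ (1/2)(|xb|² + |yb|²) + |xb − yb|²/(2αε²)` satisfies
`|x| ≥ (1/√α)(−C + √(C² + δ/2 − C²√α))`; and this lower bound tends to `+∞` as
`α → 0⁺`. -/
theorem stmt_11 (N : ℕ) (hN : 1 ≤ N)
    (C δ ε α : ℝ) (hC : 0 < C) (hδ : 0 < δ) (hε : 0 < ε)
    (hα : 0 < α) (hα1 : α < 1) (hCα : C ^ 2 * Real.sqrt α ≤ δ / 2)
    (xb yb : EuclideanSpace ℝ (Fin N))
    (hxb : ‖xb‖ ≤ C / Real.sqrt α) (hyb : ‖yb‖ ≤ C / Real.sqrt α)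
    (hxy : ‖xb - yb‖ ≤ C) (hlow : δ ≤ ‖xb - yb‖ ^ 2 / ε ^ 2) :
    (∀ x : EuclideanSpace ℝ (Fin N),
      (1 / 2) * (‖xb‖ ^ 2 + ‖yb‖ ^ 2) + ‖xb - yb‖ ^ 2 / (2 * α * ε ^ 2) ≤ ‖x - yb‖ ^ 2 →
      (1 / Real.sqrt α) * (-C + Real.sqrt (C ^ 2 + δ / 2 - C ^ 2 * Real.sqrt α)) ≤ ‖x‖) ∧
    Filter.Tendsto
      (fun a : ℝ =>
        (1 / Real.sqrt a) * (-C + Real.sqrt (C ^ 2 + δ / 2 - C ^ 2 * Real.sqrt a)))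
      (nhdsWithin 0 (Set.Ioi 0)) Filter.atTop :=
  stmt_11_general N C δ ε α hδ hα xb yb hxb hyb hxy hlow
end
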